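/- arXiv:1601.05123 — 3 statements merged into one kernel-verified Lean document; each statement's English description precedes it below -/
import Mathlib

section
/- There is an absolute constant C > 0 such that for every prime p, all integers K, L, M, N ≥ 1 for which the intervals I = [K+1, K+M] and J = [L+1, L+N] are contained in [1, p-1], and every sequence of complex weights α_m indexed by m ∈ I, one has |∑_{m∈I} ∑_{n∈J} α_m K_p(mn, 1)| ≤ C ‖α‖₂ N^{1/2} p, where ‖α‖₂ = (∑_{m∈I} |α_m|²)^{1/2}. -/
/-- `e_p(z) = exp(2πiz/p)`. -/
noncomputable def ep (p : ℕ) (z : ℤ) : ℂ := Complex.exp (2 * Real.pi * Complex.I * z / p)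

/-- the multiplicative inverse of `x` modulo `p`, as a natural number -/
def pinv (p x : ℕ) : ℕ := ((x : ZMod p)⁻¹).val

/-- the Kloosterman sum `K_p(m,n) = ∑_{x=1}^{p-1} e_p(m x + n x̄)` -/
noncomputable def Kl (p : ℕ) (m n : ℤ) : ℂ :=
  ∑ x ∈ Finset.Icc 1 (p - 1), ep p (m * x + n * (pinv p x : ℤ))

/-!
The inner sum over `n ∈ J` is `T(m)`, where `T(b) = ∑_{n ∈ J} K(bn, 1) = ∑_{n ∈ J} K(b, n)`.
Since reduction mod `p` is injective on `I`, Cauchy–Schwarz bounds the bilinear sum by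
`‖α‖₂ (∑_{b ∈ 𝔽_p} |T(b)|²)^{1/2}`. Kloosterman sums are orthogonal in their first variable:
`∑_b K(b, c) conj K(b, d) = p (p [c = d] - 1)`, because summing over `b` first forces the two
summation variables to agree. Hence `∑_b |T(b)|² = p N (p - N) ≤ N p²`, and the bound holds with
`C = 1`.
-/

open Finset
open scoped ComplexConjugate

theorem sum_units_eq_sum_sub {F M : Type*} [Field F] [Fintype F] [DecidableEq F]
    [AddCommGroup M] (g : F → M) :
    ∑ u : Fˣ, g u = ∑ x, g x - g 0 := by
  have : (univ : Finset Fˣ).map ⟨Units.val, Units.val_injective⟩ = univ.erase 0 := by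
    ext x
    simpa using ⟨fun ⟨u, hu⟩ => hu ▸ u.ne_zero, fun hx => ⟨Units.mk0 x hx, rfl⟩⟩
  rw [← sum_erase_eq_sub (mem_univ 0), ← this, sum_map]
  rfl

section Kloosterman

variable {F R : Type*} [Field F] [Fintype F] [DecidableEq F] [CommRing R]

noncomputable def kloosterman (ψ : AddChar F R) (m n : F) : R :=
  ∑ u : Fˣ, ψ (m * u + n * (u : F)⁻¹)

theorem sum_units_mulShift [IsDomain R] {ψ : AddChar F R} (hψ : ψ.IsPrimitive) (b : F) :
    ∑ u : Fˣ, ψ (u * b) = if b = 0 then (Fintype.card F : R) - 1 else -1 := by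
  rw [sum_units_eq_sum_sub (fun x => ψ (x * b)), AddChar.sum_mulShift b hψ]
  split_ifs <;> simp

theorem kloosterman_mul_eq_kloosterman_mul (ψ : AddChar F R) (m n : F) {c : F} (hc : c ≠ 0) :
    kloosterman ψ (m * c) n = kloosterman ψ m (n * c) := by
  rw [kloosterman]
  conv_rhs => rw [kloosterman, ← Equiv.sum_comp (Equiv.mulLeft (Units.mk0 c hc))]
  refine sum_congr rfl fun u _ => congrArg ψ ?_
  simp only [Equiv.coe_mulLeft, Units.val_mul, Units.val_mk0, mul_inv_rev]
  field_simp

end Kloosterman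

section RCLike

variable {F 𝕜 : Type*} [Field F] [Fintype F] [DecidableEq F] [RCLike 𝕜]

theorem sum_kloosterman_mul_conj {ψ : AddChar F 𝕜} (hψ : ψ.IsPrimitive) (c d : F) :
    ∑ b, kloosterman ψ b c * conj (kloosterman ψ b d) =
      Fintype.card F * ((if c = d then (Fintype.card F : 𝕜) else 0) - 1) := by
  have hprod : ∀ b, kloosterman ψ b c * conj (kloosterman ψ b d) =
      ∑ u : Fˣ, ∑ v : Fˣ, ψ (b * (u - v)) * ψ (c * (u : F)⁻¹ - d * (v : F)⁻¹) := by
    intro b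
    rw [kloosterman, kloosterman, map_sum, sum_mul_sum]
    refine sum_congr rfl fun u _ => sum_congr rfl fun v _ => ?_
    rw [← AddChar.map_neg_eq_conj, ← AddChar.map_add_eq_mul, ← AddChar.map_add_eq_mul]
    congr 1
    ring
  calc ∑ b, kloosterman ψ b c * conj (kloosterman ψ b d)
      = ∑ u : Fˣ, ∑ v : Fˣ, (∑ b, ψ (b * (u - v))) * ψ (c * (u : F)⁻¹ - d * (v : F)⁻¹) := by
        simp_rw [hprod, sum_mul]
        rw [sum_comm]
        exact sum_congr rfl fun u _ => sum_comm
    _ = ∑ u : Fˣ, Fintype.card F * ψ ((u : F)⁻¹ * (c - d)) := by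
        refine sum_congr rfl fun u _ => ?_
        simp only [AddChar.sum_mulShift _ hψ, sub_eq_zero, Units.val_inj, Nat.cast_ite,
          Nat.cast_zero, ite_mul, zero_mul, sum_ite_eq, mem_univ, if_true]
        congr 2
        ring
    _ = Fintype.card F * ((if c = d then (Fintype.card F : 𝕜) else 0) - 1) := by
        rw [← mul_sum, ← Equiv.sum_comp (Equiv.inv Fˣ)]
        simp only [Equiv.inv_apply, Units.val_inv_eq_inv_val, inv_inv]
        rw [sum_units_mulShift hψ]
        simp only [sub_eq_zero]
        split_ifs <;> ring

theorem sum_norm_sq_sum_kloosterman {ψ : AddChar F 𝕜} (hψ : ψ.IsPrimitive) (S : Finset F) :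
    ∑ b, ‖∑ n ∈ S, kloosterman ψ b n‖ ^ 2 =
      Fintype.card F * #S * (Fintype.card F - #S) := by
  apply RCLike.ofReal_injective (K := 𝕜)
  rw [RCLike.ofReal_sum]
  simp_rw [RCLike.ofReal_pow, ← RCLike.mul_conj, map_sum, sum_mul_sum]
  rw [sum_comm, sum_congr rfl fun i _ => sum_comm]
  simp_rw [sum_kloosterman_mul_conj hψ, ← mul_sum, sum_sub_distrib, sum_ite_eq]
  simp
  ring

theorem sum_norm_sq_sum_kloosterman_mul_le {ψ : AddChar F 𝕜} (hψ : ψ.IsPrimitive) {S : Finset F}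
    (hS : 0 ∉ S) :
    ∑ b, ‖∑ n ∈ S, kloosterman ψ (b * n) 1‖ ^ 2 ≤ #S * Fintype.card F ^ 2 := by
  have hK : ∀ b, ∑ n ∈ S, kloosterman ψ (b * n) 1 = ∑ n ∈ S, kloosterman ψ b n := fun b =>
    sum_congr rfl fun n hn => by
      rw [kloosterman_mul_eq_kloosterman_mul ψ b 1 (ne_of_mem_of_not_mem hn hS), one_mul]
  simp_rw [hK, sum_norm_sq_sum_kloosterman hψ]
  nlinarith [mul_nonneg (sq_nonneg (#S : ℝ)) (Fintype.card F).cast_nonneg]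

end RCLike

theorem norm_sum_mul_comp_le {ι β 𝕜 : Type*} [Fintype β] [RCLike 𝕜] {s : Finset ι} {f : ι → β}
    (hf : Set.InjOn f s) (α : ι → 𝕜) (T : β → 𝕜) :
    ‖∑ i ∈ s, α i * T (f i)‖ ≤ √(∑ i ∈ s, ‖α i‖ ^ 2) * √(∑ b, ‖T b‖ ^ 2) := by
  classical
  calc ‖∑ i ∈ s, α i * T (f i)‖ ≤ ∑ i ∈ s, ‖α i‖ * ‖T (f i)‖ := by
        simpa only [norm_mul] using norm_sum_le s (fun i => α i * T (f i))
    _ ≤ √(∑ i ∈ s, ‖α i‖ ^ 2) * √(∑ i ∈ s, ‖T (f i)‖ ^ 2) := Real.sum_mul_le_sqrt_mul_sqrt _ _ _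
    _ ≤ √(∑ i ∈ s, ‖α i‖ ^ 2) * √(∑ b, ‖T b‖ ^ 2) := by
        rw [← sum_image (f := fun b => ‖T b‖ ^ 2) hf]
        gcongr
        exact subset_univ _

section ZMod

variable {p : ℕ} [Fact p.Prime]

theorem ep_eq_stdAddChar (z : ℤ) : ep p z = ZMod.stdAddChar (z : ZMod p) :=
  (ZMod.stdAddChar_coe z).symm

theorem ZMod.natCast_injOn_Icc : Set.InjOn (Nat.cast : ℕ → ZMod p) (Icc 1 (p - 1)) :=
  (CharP.natCast_injOn_Iio _ p).mono fun x hx => by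
    rw [coe_Icc, Set.mem_Icc] at hx
    exact Set.mem_Iio.2 (by omega)

theorem ZMod.image_natCast_Icc :
    (Icc 1 (p - 1)).image (Nat.cast : ℕ → ZMod p) = univ.erase 0 := by
  ext y
  simp only [mem_image, mem_Icc, mem_erase, mem_univ, and_true]
  constructor
  · rintro ⟨x, hx, rfl⟩ h0
    have := CharP.natCast_injOn_Iio (ZMod p) p (Set.mem_Iio.2 (by omega))
      (Set.mem_Iio.2 (Fact.out : p.Prime).pos) (h0.trans Nat.cast_zero.symm)
    omega
  · intro hy
    have := ZMod.val_lt y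
    have := (ZMod.val_ne_zero y).2 hy
    exact ⟨y.val, by omega, ZMod.natCast_zmod_val y⟩

theorem ZMod.sum_Icc_natCast_eq_sum_units {M : Type*} [AddCommGroup M] (g : ZMod p → M) :
    ∑ x ∈ Icc 1 (p - 1), g x = ∑ u : (ZMod p)ˣ, g u := by
  rw [← sum_image (f := g) ZMod.natCast_injOn_Icc, ZMod.image_natCast_Icc,
    sum_erase_eq_sub (mem_univ _), sum_units_eq_sum_sub]

theorem Kl_eq_kloosterman (m n : ℤ) : Kl p m n = kloosterman ZMod.stdAddChar (m : ZMod p) n := by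
  rw [Kl, kloosterman,
    ← ZMod.sum_Icc_natCast_eq_sum_units fun y : ZMod p =>
      ZMod.stdAddChar ((m : ZMod p) * y + (n : ZMod p) * y⁻¹)]
  refine sum_congr rfl fun x _ => ?_
  rw [ep_eq_stdAddChar, pinv]
  push_cast [ZMod.natCast_val, ZMod.cast_id]
  rfl

end ZMod

theorem bilinear_Kloosterman_l2_bound :
    ∃ C : ℝ, 0 < C ∧
      ∀ p K L M N : ℕ, p.Prime → 1 ≤ K → 1 ≤ L → 1 ≤ M → 1 ≤ N →
        K + M ≤ p - 1 → L + N ≤ p - 1 → ∀ α : ℕ → ℂ,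
        ‖∑ m ∈ Finset.Icc (K + 1) (K + M), ∑ n ∈ Finset.Icc (L + 1) (L + N),
            α m * Kl p ((m : ℤ) * n) 1‖ ≤
          C * Real.sqrt (∑ m ∈ Finset.Icc (K + 1) (K + M), ‖α m‖ ^ 2) *
            Real.sqrt N * p := by
  refine ⟨1, one_pos, fun p K L M N hp _ _ _ _ hKM hLN α => ?_⟩
  have : Fact p.Prime := ⟨hp⟩
  have hI : Set.InjOn (Nat.cast : ℕ → ZMod p) (Icc (K + 1) (K + M)) :=
    ZMod.natCast_injOn_Icc.mono (coe_subset.2 (Icc_subset_Icc (by omega) hKM))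
  have hJsub : Icc (L + 1) (L + N) ⊆ Icc 1 (p - 1) := Icc_subset_Icc (by omega) hLN
  have hJ : Set.InjOn (Nat.cast : ℕ → ZMod p) (Icc (L + 1) (L + N)) :=
    ZMod.natCast_injOn_Icc.mono (coe_subset.2 hJsub)
  have hJ0 : (0 : ZMod p) ∉ (Icc (L + 1) (L + N)).image Nat.cast := fun h0 => by
    have := image_subset_image (f := (Nat.cast : ℕ → ZMod p)) hJsub h0
    rw [ZMod.image_natCast_Icc] at this
    exact notMem_erase 0 univ this
  have hB := sum_norm_sq_sum_kloosterman_mul_le (ZMod.isPrimitive_stdAddChar p) hJ0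
  rw [card_image_of_injOn hJ, Nat.card_Icc, ZMod.card, Nat.add_sub_add_right,
    Nat.add_sub_cancel_left] at hB
  set T : ZMod p → ℂ := fun b => ∑ n ∈ (Icc (L + 1) (L + N)).image Nat.cast,
    kloosterman ZMod.stdAddChar (b * n) 1 with hT
  have hsum : ∑ m ∈ Icc (K + 1) (K + M), ∑ n ∈ Icc (L + 1) (L + N), α m * Kl p ((m : ℤ) * n) 1 =
      ∑ m ∈ Icc (K + 1) (K + M), α m * T m := by
    simp_rw [hT, sum_image hJ, mul_sum, Kl_eq_kloosterman]
    push_cast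
    rfl
  rw [hsum, one_mul]
  refine (norm_sum_mul_comp_le hI α T).trans ?_
  calc _ ≤ √(∑ m ∈ Icc (K + 1) (K + M), ‖α m‖ ^ 2) * √(N * p ^ 2) := by gcongr
    _ = _ := by rw [Real.sqrt_mul (Nat.cast_nonneg _), Real.sqrt_sq (Nat.cast_nonneg _), mul_assoc]
end

section
/- For every ε > 0 there exists a constant C > 0 such that for every prime p and all integers X, Y with 1 ≤ X, Y < p, the number of pairs of integers (x, y) with 1 ≤ |x| ≤ X, 1 ≤ |y| ≤ Y and xy ≡ 1 (mod p) is at most C (XY/p + 1) p^ε. -/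
/-!
A pair with `xy ≡ 1 (mod p)`, `|x| ≤ X`, `|y| ≤ Y` has a product `n ≡ 1 (mod p)` with
`0 < |n| ≤ XY < p²`. There are at most `2XY/p + 2` such `n`, and each is the product of at most
`2 d(|n|)` pairs, so the divisor bound `d(n) ≪_ε n ^ (ε/2) ≤ p ^ ε` gives the estimate.
-/

open Finset

lemma add_one_le_mul_pow {c y : ℝ} (hc : 0 < c) (hy : 1 + c ≤ y) (k : ℕ) :
    (k + 1 : ℝ) ≤ (1 + c⁻¹) * y ^ k := by
  have bernoulli : 1 + k * c ≤ y ^ k :=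
    (one_add_mul_le_pow (by linarith) k).trans (pow_le_pow_left₀ (by linarith) hy k)
  calc (k + 1 : ℝ) ≤ (1 + c⁻¹) * (1 + k * c) := by
        have : (1 + c⁻¹) * (1 + k * c) = k + 1 + (k * c + c⁻¹) := by field_simp; ring
        rw [this]; linarith [show 0 ≤ k * c + c⁻¹ by positivity]
    _ ≤ (1 + c⁻¹) * y ^ k := by gcongr

lemma add_one_le_pow {y : ℝ} (hy : 2 ≤ y) (k : ℕ) : (k + 1 : ℝ) ≤ y ^ k := by
  have bernoulli := one_add_mul_le_pow (a := y - 1) (by linarith) k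
  rw [add_sub_cancel] at bernoulli
  nlinarith [k.cast_nonneg (α := ℝ)]

lemma Nat.rpow_eq_prod_primeFactors {n : ℕ} (hn : n ≠ 0) (ε : ℝ) :
    (n : ℝ) ^ ε = ∏ p ∈ n.primeFactors, ((p : ℝ) ^ ε) ^ n.factorization p := by
  conv_lhs => rw [← n.prod_factorization_pow_eq_self hn]
  rw [Finsupp.prod, Nat.cast_prod, ← Real.finsetProd_rpow _ _ (fun _ _ ↦ by positivity)]
  refine prod_congr rfl fun p _ ↦ ?_
  rw [Nat.cast_pow, Real.rpow_pow_comm p.cast_nonneg]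

theorem Nat.card_divisors_le_mul_rpow {ε : ℝ} (hε : 0 < ε) :
    ∃ C : ℝ, 0 < C ∧ ∀ n : ℕ, n ≠ 0 → (#n.divisors : ℝ) ≤ C * (n : ℝ) ^ ε := by
  set c : ℝ := 2 ^ ε - 1
  have hc : 0 < c := sub_pos.mpr (Real.one_lt_rpow (by norm_num) hε)
  set B : ℕ := ⌈(2 : ℝ) ^ ε⁻¹⌉₊
  -- a prime `p > B` has `p ^ ε ≥ 2`, so its factor `k + 1` of `d(n)` is absorbed by `(p ^ ε) ^ k`
  set w : ℕ → ℝ := fun p ↦ if p ≤ B then 1 + c⁻¹ else 1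
  refine ⟨(1 + c⁻¹) ^ (B + 1), by positivity, fun n hn ↦ ?_⟩
  have hlocal : ∀ p ∈ n.primeFactors,
      (n.factorization p + 1 : ℝ) ≤ w p * ((p : ℝ) ^ ε) ^ n.factorization p := by
    intro p hp
    have hp2 : (2 : ℝ) ≤ p := by exact_mod_cast (Nat.prime_of_mem_primeFactors hp).two_le
    simp only [w]
    split_ifs with hpB
    · refine add_one_le_mul_pow hc ?_ _
      rw [add_sub_cancel]
      exact Real.rpow_le_rpow (by norm_num) hp2 hε.le
    · rw [one_mul]
      refine add_one_le_pow ?_ _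
      have hBp : (2 : ℝ) ^ ε⁻¹ ≤ p := (Nat.le_ceil _).trans (by exact_mod_cast (not_le.mp hpB).le)
      calc (2 : ℝ) = ((2 : ℝ) ^ ε⁻¹) ^ ε := by
            rw [← Real.rpow_mul (by norm_num), inv_mul_cancel₀ hε.ne', Real.rpow_one]
        _ ≤ (p : ℝ) ^ ε := Real.rpow_le_rpow (by positivity) hBp hε.le
  have hweights : ∏ p ∈ n.primeFactors, w p ≤ (1 + c⁻¹) ^ (B + 1) := by
    rw [prod_ite, prod_const, prod_const_one, mul_one]
    refine pow_le_pow_right₀ (by linarith [inv_pos.mpr hc])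
      ((card_le_card fun p hp ↦ ?_).trans_eq (card_range (B + 1)))
    simp only [mem_filter] at hp
    simp only [mem_range]
    omega
  calc (#n.divisors : ℝ) = ∏ p ∈ n.primeFactors, (n.factorization p + 1 : ℝ) := by
        rw [Nat.card_divisors hn]; push_cast; rfl
    _ ≤ ∏ p ∈ n.primeFactors, w p * ((p : ℝ) ^ ε) ^ n.factorization p :=
        prod_le_prod (fun _ _ ↦ by positivity) hlocal
    _ = (∏ p ∈ n.primeFactors, w p) * (n : ℝ) ^ ε := by
        rw [prod_mul_distrib, Nat.rpow_eq_prod_primeFactors hn]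
    _ ≤ (1 + c⁻¹) ^ (B + 1) * (n : ℝ) ^ ε := by gcongr

lemma Int.card_divisors (z : ℤ) : #z.divisors = 2 * #z.natAbs.divisors := by
  rw [Int.divisors, card_disjUnion, card_map, card_map, two_mul]

lemma Int.card_divisorsAntidiag (z : ℤ) : #z.divisorsAntidiag = 2 * #z.natAbs.divisors := by
  rw [← card_divisors, ← image_fst_divisorsAntidiag, card_image_of_injOn]
  rintro ⟨a, b⟩ hab ⟨a', b'⟩ hab' (rfl : a = a')
  simp only [mem_coe, mem_divisorsAntidiag] at hab hab'
  have ha : a ≠ 0 := left_ne_zero_of_mul (hab.1 ▸ hab.2)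
  simp only [Prod.mk.injEq, true_and]
  exact mul_left_cancel₀ ha (hab.1.trans hab'.1.symm)

lemma Int.card_Icc_filter_modEq_le {a b : ℤ} (hab : a ≤ b) {r : ℤ} (hr : 0 < r) (v : ℤ) :
    (#{x ∈ Icc a b | x ≡ v [ZMOD r]} : ℝ) ≤ (b - a + 1) / r + 1 := by
  have hcard := Int.Ico_filter_modEq_card a (b + 1) hr v
  rw [Ico_add_one_right_eq_Icc] at hcard
  have hceil_b := Int.ceil_lt_add_one (((b + 1 : ℤ) - v : ℚ) / r)
  have hceil_a := Int.le_ceil ((a - v : ℚ) / r)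
  have hdiff : ((b + 1 : ℤ) - v : ℚ) / r + 1 - (a - v) / r = (b - a + 1) / r + 1 := by
    push_cast; field_simp; ring
  have hnonneg : (0 : ℚ) ≤ (b - a + 1) / r + 1 := by
    have : (0 : ℚ) ≤ b - a := by exact_mod_cast sub_nonneg.mpr hab
    positivity
  have key : (#{x ∈ Icc a b | x ≡ v [ZMOD r]} : ℚ) ≤ (b - a + 1) / r + 1 := calc
    (#{x ∈ Icc a b | x ≡ v [ZMOD r]} : ℚ) = ((#{x ∈ Icc a b | x ≡ v [ZMOD r]} : ℤ) : ℚ) := rfl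
    _ = max ((⌈((b + 1 : ℤ) - v : ℚ) / r⌉ : ℚ) - ⌈(a - v : ℚ) / r⌉) 0 := by rw [hcard]; push_cast; rfl
    _ ≤ (b - a + 1) / r + 1 := max_le (by linarith) hnonneg
  exact_mod_cast key

lemma card_filter_mul_eq_le (s : Finset (ℤ × ℤ)) {n : ℤ} (hn : n ≠ 0) :
    #{q ∈ s | q.1 * q.2 = n} ≤ 2 * #n.natAbs.divisors := by
  rw [← Int.card_divisorsAntidiag]
  exact card_le_card fun q hq ↦ Int.mem_divisorsAntidiag.mpr ⟨(mem_filter.mp hq).2, hn⟩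

theorem card_filter_dvd_mul_sub_one_le {m : ℕ} (hm : 1 < m) {X Y : ℤ} (hX : 0 ≤ X) (hY : 0 ≤ Y)
    {D : ℝ} (hD0 : 0 ≤ D) (hD : ∀ n : ℕ, n ≠ 0 → (n : ℤ) ≤ X * Y → (#n.divisors : ℝ) ≤ D) :
    (#{q ∈ Icc (-X) X ×ˢ Icc (-Y) Y | (m : ℤ) ∣ q.1 * q.2 - 1} : ℝ) ≤
      4 * D * (X * Y / m + 1) := by
  set S := {q ∈ Icc (-X) X ×ˢ Icc (-Y) Y | (m : ℤ) ∣ q.1 * q.2 - 1}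
  set T := {n ∈ Icc (-(X * Y)) (X * Y) | n ≡ 1 [ZMOD m]}
  have hmaps : Set.MapsTo (fun q : ℤ × ℤ ↦ q.1 * q.2) S T := by
    intro q hq
    simp only [S, coe_filter, mem_product, mem_Icc, Set.mem_ofPred_eq] at hq
    obtain ⟨⟨hx, hy⟩, hdvd⟩ := hq
    have hxy : |q.1 * q.2| ≤ X * Y := by
      rw [abs_mul]; exact mul_le_mul (abs_le.mpr hx) (abs_le.mpr hy) (abs_nonneg _) hX
    simp only [T, coe_filter, mem_Icc, Set.mem_ofPred_eq]
    exact ⟨abs_le.mp hxy, (Int.modEq_iff_dvd.mpr hdvd).symm⟩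
  have hfiber : ∀ n ∈ T, (#{q ∈ S | q.1 * q.2 = n} : ℝ) ≤ 2 * D := by
    intro n hn
    simp only [T, mem_filter, mem_Icc] at hn
    obtain ⟨⟨hnlo, hnhi⟩, hmod⟩ := hn
    have hn0 : n ≠ 0 := by
      rintro rfl
      have : (m : ℤ) ∣ 1 := by simpa using hmod.symm.dvd
      have := Int.le_of_dvd one_pos this
      omega
    calc (#{q ∈ S | q.1 * q.2 = n} : ℝ) ≤ ((2 * #n.natAbs.divisors : ℕ) : ℝ) := by
          exact_mod_cast card_filter_mul_eq_le S hn0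
      _ ≤ 2 * D := by
          push_cast
          gcongr
          exact hD _ (by omega) (by omega)
  have hT : (#T : ℝ) ≤ 2 * (X * Y / m + 1) := by
    have hmR : (1 : ℝ) ≤ m := by exact_mod_cast hm.le
    have hcount := Int.card_Icc_filter_modEq_le (a := -(X * Y)) (b := X * Y) (by nlinarith)
      (by omega : (0 : ℤ) < m) 1
    calc (#T : ℝ) ≤ _ := hcount
      _ = 2 * (X * Y / m) + 1 / m + 1 := by push_cast; ring
      _ ≤ 2 * (X * Y / m + 1) := by linarith [div_le_one_of_le₀ hmR (by positivity)]
  calc (#S : ℝ) = ∑ n ∈ T, (#{q ∈ S | q.1 * q.2 = n} : ℝ) := by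
        rw [card_eq_sum_card_fiberwise hmaps]; push_cast; rfl
    _ ≤ #T * (2 * D) := by simpa using sum_le_card_nsmul T _ _ hfiber
    _ ≤ 2 * (X * Y / m + 1) * (2 * D) := by gcongr
    _ = 4 * D * (X * Y / m + 1) := by ring

theorem count_inverse_pairs :
    ∀ ε : ℝ, 0 < ε → ∃ C : ℝ, 0 < C ∧
      ∀ p : ℕ, p.Prime → ∀ X Y : ℤ, 1 ≤ X → X < p → 1 ≤ Y → Y < p →
        (((Finset.Icc (-X) X ×ˢ Finset.Icc (-Y) Y).filter
            (fun q : ℤ × ℤ => 1 ≤ |q.1| ∧ 1 ≤ |q.2| ∧ (p : ℤ) ∣ q.1 * q.2 - 1)).card : ℝ) ≤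
          C * ((X : ℝ) * (Y : ℝ) / (p : ℝ) + 1) * (p : ℝ) ^ ε := by
  intro ε hε
  obtain ⟨C, hC, hdiv⟩ := Nat.card_divisors_le_mul_rpow (half_pos hε)
  refine ⟨4 * C, by positivity, fun p hp X Y hX hXp hY hYp ↦ ?_⟩
  have hp0 : (0 : ℝ) ≤ p := p.cast_nonneg
  have hD : ∀ n : ℕ, n ≠ 0 → (n : ℤ) ≤ X * Y → (#n.divisors : ℝ) ≤ C * (p : ℝ) ^ ε := by
    intro n hn hnXY
    have hnp : (n : ℤ) ≤ (p : ℤ) ^ 2 := hnXY.trans (by nlinarith)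
    replace hnp : (n : ℝ) ≤ (p : ℝ) ^ 2 := by exact_mod_cast hnp
    calc (#n.divisors : ℝ) ≤ C * (n : ℝ) ^ (ε / 2) := hdiv n hn
      _ ≤ C * ((p : ℝ) ^ 2) ^ (ε / 2) := by gcongr
      _ = C * (p : ℝ) ^ ε := by rw [← Real.rpow_natCast_mul hp0]; ring_nf
  calc _ ≤ (#{q ∈ Icc (-X) X ×ˢ Icc (-Y) Y | (p : ℤ) ∣ q.1 * q.2 - 1} : ℝ) := by
        exact_mod_cast card_le_card (monotone_filter_right _ fun _ _ ↦ And.right ∘ And.right)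
    _ ≤ 4 * (C * (p : ℝ) ^ ε) * (X * Y / p + 1) :=
        card_filter_dvd_mul_sub_one_le hp.one_lt (by omega) (by omega) (by positivity) hD
    _ = 4 * C * (X * Y / p + 1) * (p : ℝ) ^ ε := by ring
end

section
/- For every ε > 0 there exists a constant C > 0 such that for every prime p and all integers M, N with 1 ≤ M, N < p, one has ∑ 1/‖x̄‖_p ≤ C (1/M + N/p) p^ε, where the sum is over all integers x with 1 ≤ x ≤ p-1, ‖x‖_p ≤ p/M and ‖x̄‖_p > p/N. -/
/-- `‖u‖_p`: the distance from `u` to the nearest multiple of `p` -/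
def dp (p : ℕ) (u : ℤ) : ℕ := min (u % p).toNat (p - (u % p).toNat)

/-!
Write `a = ‖x‖_p` and `b = ‖x̄‖_p`. Since `ab ≡ ±1 (mod p)` and `b ≥ 2` (as `p < Nb` with
`N < p`), we have `ab = kp ± 1` for some `1 ≤ k ≤ p`, and `Ma ≤ p` gives `kM ≤ 2b`, so each term
is at most `2/(kM)`. For fixed `k`, `a` divides `kp - 1` or `kp + 1` and determines `x` up to
sign, so by the divisor bound there are `O(p^{ε'})` such `x`. Summing `2/(kM)` over `k ≤ p` costs
one more factor `log p`.
-/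

open Finset Real

lemma succ_le_mul_pow {x : ℝ} (hx : 1 < x) (a : ℕ) : (a + 1 : ℝ) ≤ x / (x - 1) * x ^ a := by
  have hx1 : 0 < x - 1 := sub_pos.2 hx
  have hbern : 1 + a * (x - 1) ≤ x ^ a := by
    simpa using one_add_mul_le_pow (a := x - 1) (by linarith) a
  have hx_div : 1 ≤ x / (x - 1) := by rw [le_div_iff₀ hx1]; linarith
  calc (a + 1 : ℝ) ≤ x / (x - 1) + a * x := by nlinarith [(Nat.cast_nonneg a : (0 : ℝ) ≤ a)]
    _ = x / (x - 1) * (1 + a * (x - 1)) := by field_simp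
    _ ≤ x / (x - 1) * x ^ a := by gcongr

lemma succ_le_pow {x : ℝ} (hx : 2 ≤ x) (a : ℕ) : (a + 1 : ℝ) ≤ x ^ a := by
  have := one_add_mul_le_pow (a := x - 1) (by linarith) a
  simp only [add_sub_cancel] at this
  nlinarith [(Nat.cast_nonneg a : (0 : ℝ) ≤ a)]

theorem exists_card_divisors_le_mul_rpow {δ : ℝ} (hδ : 0 < δ) :
    ∃ C : ℝ, 0 < C ∧ ∀ n : ℕ, n ≠ 0 → (#n.divisors : ℝ) ≤ C * (n : ℝ) ^ δ := by
  have h2δ : 1 < (2 : ℝ) ^ δ := one_lt_rpow (by norm_num) hδ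
  set B := (2 : ℝ) ^ δ / ((2 : ℝ) ^ δ - 1)
  have hB : 1 ≤ B := by
    rw [le_div_iff₀ (by linarith)]; linarith
  set T := ⌈(2 : ℝ) ^ δ⁻¹⌉₊
  refine ⟨B ^ (T + 1), by positivity, fun n hn => ?_⟩
  have hfactor : ∀ q ∈ n.primeFactors, (n.factorization q + 1 : ℝ) ≤
      (if q ≤ T then B else 1) * ((q : ℝ) ^ δ) ^ n.factorization q := by
    intro q hq
    have hq2 : (2 : ℝ) ≤ q := by exact_mod_cast (Nat.prime_of_mem_primeFactors hq).two_le
    split_ifs with hqT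
    · calc _ ≤ B * ((2 : ℝ) ^ δ) ^ n.factorization q := succ_le_mul_pow h2δ _
        _ ≤ B * ((q : ℝ) ^ δ) ^ n.factorization q := by gcongr
    · rw [one_mul]
      refine succ_le_pow ?_ _
      calc (2 : ℝ) = ((2 : ℝ) ^ δ⁻¹) ^ δ := by
            rw [← rpow_mul zero_le_two, inv_mul_cancel₀ hδ.ne', rpow_one]
        _ ≤ (q : ℝ) ^ δ := by
          gcongr
          exact (Nat.le_ceil _).trans (by exact_mod_cast (not_le.1 hqT).le)
  have hsmall : ∏ q ∈ n.primeFactors, (if q ≤ T then B else 1) ≤ B ^ (T + 1) := by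
    rw [prod_ite, prod_const_one, mul_one, prod_const]
    refine pow_le_pow_right₀ hB ((card_le_card fun q hq => ?_).trans (card_range _).le)
    exact mem_range.2 (Nat.lt_succ_of_le (mem_filter.1 hq).2)
  have hn_eq : (n : ℝ) ^ δ = ∏ q ∈ n.primeFactors, ((q : ℝ) ^ δ) ^ n.factorization q := by
    conv_lhs => rw [← Nat.prod_factorization_pow_eq_self hn]
    rw [Nat.prod_factorization_eq_prod_primeFactors, Nat.cast_prod,
      ← finsetProd_rpow _ _ fun _ _ => by positivity]
    refine prod_congr rfl fun q _ => ?_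
    rw [Nat.cast_pow, ← rpow_natCast, ← rpow_natCast, ← rpow_mul, ← rpow_mul, mul_comm] <;> positivity
  calc (#n.divisors : ℝ) = ∏ q ∈ n.primeFactors, (n.factorization q + 1 : ℝ) := by
        rw [Nat.card_divisors hn]; push_cast; rfl
    _ ≤ ∏ q ∈ n.primeFactors, (if q ≤ T then B else 1) * ((q : ℝ) ^ δ) ^ n.factorization q :=
        prod_le_prod (fun _ _ => by positivity) hfactor
    _ ≤ B ^ (T + 1) * (n : ℝ) ^ δ := by
        rw [prod_mul_distrib, hn_eq]
        gcongr

lemma sum_Icc_one_div_le_rpow {δ : ℝ} (hδ : 0 < δ) (n : ℕ) :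
    ∑ k ∈ Icc 1 n, (1 : ℝ) / k ≤ (1 + δ⁻¹) * (n : ℝ) ^ δ := by
  rcases n.eq_zero_or_pos with rfl | hn
  · simp [zero_rpow hδ.ne']
  have hharm : ∑ k ∈ Icc 1 n, (1 : ℝ) / k ≤ 1 + log n := by
    simpa [harmonic_eq_sum_Icc, one_div] using harmonic_le_one_add_log n
  have hlog : log n ≤ δ⁻¹ * (n : ℝ) ^ δ := by
    simpa [div_eq_inv_mul] using log_natCast_le_rpow_div n hδ
  have hone : 1 ≤ (n : ℝ) ^ δ := one_le_rpow (by exact_mod_cast hn) hδ.le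
  linarith

lemma dp_natCast_of_lt {p u : ℕ} (hu : u < p) : dp p u = min u (p - u) := by
  rw [dp, Int.emod_eq_of_lt (by positivity) (by exact_mod_cast hu), Int.toNat_natCast]

lemma dp_lt (p : ℕ) [NeZero p] (u : ℤ) : dp p u < p := by
  have := Int.emod_lt_of_pos u (by exact_mod_cast NeZero.pos p : (0 : ℤ) < p)
  have := NeZero.pos p
  rw [dp]; omega

lemma eq_dp_or_eq_sub_dp {p u : ℕ} (hu : u < p) : u = dp p u ∨ u = p - dp p u := by
  rw [dp_natCast_of_lt hu]; omega

lemma natCast_dp_eq_or_eq_neg (p : ℕ) [NeZero p] (u : ℤ) :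
    ((dp p u : ℕ) : ZMod p) = u ∨ ((dp p u : ℕ) : ZMod p) = -u := by
  have hr : (((u % p).toNat : ℕ) : ZMod p) = u := by
    rw [← Int.cast_natCast, Int.toNat_of_nonneg (Int.emod_nonneg _ (by simp [NeZero.ne p])),
      ZMod.intCast_mod]
  have hlt : (u % p).toNat ≤ p := by
    have := Int.emod_lt_of_pos u (by exact_mod_cast NeZero.pos p : (0 : ℤ) < p); omega
  rcases min_cases (u % p).toNat (p - (u % p).toNat) with ⟨h, -⟩ | ⟨h, -⟩
  · left; rw [dp, h, hr]
  · right; rw [dp, h, Nat.cast_sub hlt, hr, ZMod.natCast_self, zero_sub]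

lemma natCast_dp_mul_dp_pinv {p x : ℕ} [Fact p.Prime] (hx : (x : ZMod p) ≠ 0) :
    ((dp p x * dp p (pinv p x) : ℕ) : ZMod p) = 1 ∨
      ((dp p x * dp p (pinv p x) : ℕ) : ZMod p) = -1 := by
  have hinv : ((pinv p x : ℤ) : ZMod p) = (x : ZMod p)⁻¹ := by
    rw [Int.cast_natCast, pinv, ZMod.natCast_zmod_val]
  have hx' : ((x : ℤ) : ZMod p) * (x : ZMod p)⁻¹ = 1 := by
    rw [Int.cast_natCast]; exact mul_inv_cancel₀ hx
  rw [Nat.cast_mul]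
  rcases natCast_dp_eq_or_eq_neg p x with ha | ha <;>
    rcases natCast_dp_eq_or_eq_neg p (pinv p x) with hb | hb <;>
    simp only [ha, hb, hinv, neg_mul, mul_neg, neg_neg, hx', true_or, or_true]

lemma card_le_two_mul_card_image_dp {p : ℕ} {s : Finset ℕ} (hs : ∀ x ∈ s, x < p) :
    #s ≤ 2 * #(s.image fun x : ℕ => dp p x) := by
  refine card_le_mul_card_image s 2 fun d _ => ?_
  calc #(s.filter fun x : ℕ => dp p x = d) ≤ #({d, p - d} : Finset ℕ) :=
        card_le_card fun x hx => by
          obtain ⟨hxs, rfl⟩ := mem_filter.1 hx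
          simpa using eq_dp_or_eq_sub_dp (hs x hxs)
    _ ≤ 2 := card_le_two

lemma div_mul_add_one_eq_or {p n : ℕ} (hp : 3 ≤ p) (hn : (n : ZMod p) = 1 ∨ (n : ZMod p) = -1) :
    (n + 1) / p * p + 1 = n ∨ (n + 1) / p * p = n + 1 := by
  rcases hn with hn | hn
  · left
    rw [← Nat.cast_one, ZMod.natCast_eq_natCast_iff', Nat.one_mod_eq_one.2 (by omega)] at hn
    obtain ⟨q, rfl⟩ : ∃ q, n = p * q + 1 := ⟨n / p, by have := Nat.div_add_mod n p; omega⟩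
    rw [add_assoc, Nat.mul_add_div (by omega), Nat.div_eq_of_lt (show 1 + 1 < p by omega), add_zero,
      mul_comm]
  · right
    have hdvd : p ∣ n + 1 := by
      rw [← ZMod.natCast_eq_zero_iff, Nat.cast_succ, hn, neg_add_cancel]
    exact Nat.div_mul_cancel hdvd

/-- The `k` with `‖x‖_p ‖x̄‖_p = k p ± 1` (see `dpLevel_mul_eq`). -/
def dpLevel (p x : ℕ) : ℕ := (dp p x * dp p (pinv p x) + 1) / p

section dpLevel

variable {p x : ℕ} (hp : p.Prime) (hx0 : 0 < x) (hxp : x < p) (hb : 2 ≤ dp p (pinv p x))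
include hp hx0 hxp hb

lemma dpLevel_mul_eq : dpLevel p x * p + 1 = dp p x * dp p (pinv p x) ∨
    dpLevel p x * p = dp p x * dp p (pinv p x) + 1 := by
  have := Fact.mk hp
  refine div_mul_add_one_eq_or (by have := dp_lt p (pinv p x); omega) (natCast_dp_mul_dp_pinv ?_)
  rw [Ne, ZMod.natCast_eq_zero_iff]
  exact fun h => (Nat.le_of_dvd hx0 h).not_gt hxp

lemma dpLevel_mem_Icc : dpLevel p x ∈ Icc 1 p := by
  have := Fact.mk hp
  have ha : 0 < dp p x := by rw [dp_natCast_of_lt hxp]; omega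
  have hap := dp_lt p x
  have hbp := dp_lt p (pinv p x)
  have hab : dp p x * dp p (pinv p x) + 1 ≤ p * p := by nlinarith
  rw [mem_Icc]
  constructor <;> rcases dpLevel_mul_eq hp hx0 hxp hb with h | h <;> nlinarith

lemma dpLevel_mul_le : dpLevel p x * p ≤ 2 * (dp p x * dp p (pinv p x)) := by
  have ha : 0 < dp p x := by rw [dp_natCast_of_lt hxp]; omega
  rcases dpLevel_mul_eq hp hx0 hxp hb with h | h <;> nlinarith

lemma dp_dvd_dpLevel_mul_sub_one_or :
    dp p x ∣ dpLevel p x * p - 1 ∨ dp p x ∣ dpLevel p x * p + 1 := by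
  rcases dpLevel_mul_eq hp hx0 hxp hb with h | h
  · exact Or.inr (h ▸ dvd_mul_right _ _)
  · exact Or.inl (by rw [h, Nat.add_sub_cancel]; exact dvd_mul_right _ _)

lemma one_div_dp_pinv_le {M : ℕ} (hM : 0 < M) (hMx : (M * dp p x : ℝ) ≤ p) :
    1 / (dp p (pinv p x) : ℝ) ≤ 2 / (dpLevel p x * M) := by
  have hk : (dpLevel p x * p : ℝ) ≤ 2 * (dp p x * dp p (pinv p x)) := by
    exact_mod_cast dpLevel_mul_le hp hx0 hxp hb
  have hk0 : (0 : ℝ) < dpLevel p x := by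
    exact_mod_cast (mem_Icc.1 (dpLevel_mem_Icc hp hx0 hxp hb)).1
  have hb0 : (0 : ℝ) < dp p (pinv p x) := by exact_mod_cast (by omega : 0 < dp p (pinv p x))
  have hp0 : (0 : ℝ) < p := by exact_mod_cast hp.pos
  rw [div_le_div_iff₀ hb0 (by positivity)]
  nlinarith [mul_le_mul_of_nonneg_right hMx hb0.le,
    mul_le_mul_of_nonneg_right hk (Nat.cast_nonneg M)]

end dpLevel

lemma sum_one_div_dp_pinv_le {p M k : ℕ} {s : Finset ℕ} {D : ℝ} (hp : p.Prime) (hM : 0 < M)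
    (hk : k ∈ Icc 1 p)
    (hs : ∀ x ∈ s, (0 < x ∧ x < p ∧ (M * dp p x : ℝ) ≤ p ∧ 2 ≤ dp p (pinv p x)) ∧ dpLevel p x = k)
    (hD : ∀ n, n ≠ 0 → n ≤ p ^ 3 → (#n.divisors : ℝ) ≤ D) :
    ∑ x ∈ s, (1 : ℝ) / dp p (pinv p x) ≤ 8 * D / M * (1 / k) := by
  obtain ⟨hk1, hkp⟩ := mem_Icc.1 hk
  have hp2 := hp.two_le
  have hkp1 : k * p - 1 ≠ 0 := by have := hp2.trans (Nat.le_mul_of_pos_left p hk1); omega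
  have hkp3 : k * p + 1 ≤ p ^ 3 := by
    have := Nat.mul_le_mul_right p hkp
    have := Nat.mul_le_mul_left (p * p) hp2
    rw [pow_three']; omega
  have himage : s.image (fun x : ℕ => dp p x) ⊆ (k * p - 1).divisors ∪ (k * p + 1).divisors := by
    intro d hd
    obtain ⟨x, hx, rfl⟩ := mem_image.1 hd
    obtain ⟨⟨hx0, hxp, -, hb⟩, rfl⟩ := hs x hx
    rcases dp_dvd_dpLevel_mul_sub_one_or hp hx0 hxp hb with h | h
    · exact mem_union_left _ (Nat.mem_divisors.2 ⟨h, hkp1⟩)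
    · exact mem_union_right _ (Nat.mem_divisors.2 ⟨h, by omega⟩)
  have hcard : (#s : ℝ) ≤ 2 * (D + D) := by
    have hs_card : (#s : ℝ) ≤ 2 * (#(k * p - 1).divisors + #(k * p + 1).divisors : ℕ) := by
      exact_mod_cast (card_le_two_mul_card_image_dp fun x hx => (hs x hx).1.2.1).trans
        (Nat.mul_le_mul_left 2 ((card_le_card himage).trans (card_union_le _ _)))
    push_cast at hs_card
    linarith [hD _ hkp1 (by omega), hD _ (by omega) hkp3]
  calc ∑ x ∈ s, (1 : ℝ) / dp p (pinv p x) ≤ #s • (2 / (k * M) : ℝ) := by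
        refine sum_le_card_nsmul s _ _ fun x hx => ?_
        obtain ⟨⟨hx0, hxp, hMx, hb⟩, rfl⟩ := hs x hx
        exact one_div_dp_pinv_le hp hx0 hxp hb hM hMx
    _ ≤ 2 * (D + D) * (2 / (k * M)) := by rw [nsmul_eq_mul]; gcongr
    _ = 8 * D / M * (1 / k) := by ring

theorem sum_inverse_dist_bound_S2 :
    ∀ ε : ℝ, 0 < ε → ∃ C : ℝ, 0 < C ∧
      ∀ p M N : ℕ, p.Prime → 1 ≤ M → M < p → 1 ≤ N → N < p →
        ∑ x ∈ (Finset.Icc 1 (p - 1)).filter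
            (fun x : ℕ => (M * dp p x : ℝ) ≤ p ∧ (p : ℝ) < N * dp p (pinv p x)),
            (1 : ℝ) / (dp p (pinv p x) : ℝ) ≤
          C * (1 / (M : ℝ) + (N : ℝ) / p) * (p : ℝ) ^ ε := by
  intro ε hε
  obtain ⟨C, hC, hdiv⟩ := exists_card_divisors_le_mul_rpow (δ := ε / 4) (by positivity)
  refine ⟨8 * C * (1 + (ε / 4)⁻¹), by positivity, fun p M N hp hM _ _ hNp => ?_⟩
  set S := (Finset.Icc 1 (p - 1)).filter
    (fun x : ℕ => (M * dp p x : ℝ) ≤ p ∧ (p : ℝ) < N * dp p (pinv p x))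
  have hS : ∀ x ∈ S, 0 < x ∧ x < p ∧ (M * dp p x : ℝ) ≤ p ∧ 2 ≤ dp p (pinv p x) := by
    intro x hx
    obtain ⟨hx, hMx, hNx⟩ := mem_filter.1 hx
    obtain ⟨hx1, hxp⟩ := mem_Icc.1 hx
    have hNx : p < N * dp p (pinv p x) := by exact_mod_cast hNx
    refine ⟨by omega, by omega, hMx, ?_⟩
    by_contra! hb
    nlinarith
  have hD : ∀ n, n ≠ 0 → n ≤ p ^ 3 → (#n.divisors : ℝ) ≤ C * (p : ℝ) ^ (3 * (ε / 4)) := by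
    intro n hn hnp
    refine (hdiv n hn).trans (mul_le_mul_of_nonneg_left ?_ hC.le)
    rw [rpow_mul (Nat.cast_nonneg p), rpow_ofNat]
    gcongr
    exact_mod_cast hnp
  have hp0 : (0 : ℝ) < p := by exact_mod_cast hp.pos
  calc ∑ x ∈ S, (1 : ℝ) / dp p (pinv p x)
      = ∑ k ∈ Icc 1 p, ∑ x ∈ S with dpLevel p x = k, (1 : ℝ) / dp p (pinv p x) :=
        (sum_fiberwise_of_maps_to (fun x hx => by
          obtain ⟨hx0, hxp, -, hb⟩ := hS x hx
          exact dpLevel_mem_Icc hp hx0 hxp hb) _).symm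
    _ ≤ ∑ k ∈ Icc 1 p, 8 * (C * (p : ℝ) ^ (3 * (ε / 4))) / M * (1 / k) :=
        sum_le_sum fun k hk => sum_one_div_dp_pinv_le hp hM hk
          (fun x hx => ⟨hS x (mem_filter.1 hx).1, (mem_filter.1 hx).2⟩) hD
    _ ≤ 8 * (C * (p : ℝ) ^ (3 * (ε / 4))) / M * ((1 + (ε / 4)⁻¹) * (p : ℝ) ^ (ε / 4)) := by
        rw [← mul_sum]
        gcongr
        exact sum_Icc_one_div_le_rpow (by positivity) p
    _ = 8 * C * (1 + (ε / 4)⁻¹) * (1 / M) * (p : ℝ) ^ ε := by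
        have hsplit : (p : ℝ) ^ ε = (p : ℝ) ^ (3 * (ε / 4)) * (p : ℝ) ^ (ε / 4) := by
          rw [← rpow_add hp0]; ring_nf
        rw [hsplit]; ring
    _ ≤ 8 * C * (1 + (ε / 4)⁻¹) * (1 / M + N / p) * (p : ℝ) ^ ε := by
        gcongr
        exact le_add_of_nonneg_right (by positivity)
end
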